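/- arXiv:2308.00911 — 2 statements merged into one kernel-verified Lean document; each statement's English description precedes it below -/
import Mathlib

section
/- Let G = (V', E') be a finite directed graph, T ⊆ V' × V' a finite set of source–target pairs, k a natural number, and let E'' = { (s, t) ∈ T : there is no directed path from s to t in G }. Then G has a T-cut of cardinality at most k if and only if the augmented graph (V', E' ∪ E'') has a T-cut of cardinality at most k + |E''|. -/
/-- `O` is a `T`-cut for the directed graph with edge set `E`: `O ⊆ E` and for every
source–target pair `(s, t) ∈ T` there is no directed path from `s` to `t` using
only edges in `E \ O`. -/
def IsTCut {V : Type*} (E T O : Set (V × V)) : Prop :=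
  O ⊆ E ∧ ∀ p ∈ T, ¬ Relation.ReflTransGen (fun u v => (u, v) ∈ E \ O) p.1 p.2

theorem tcut_iff_augmented_tcut {V : Type*} [Fintype V]
    (E T : Set (V × V)) (k : ℕ) (E'' : Set (V × V))
    (hE'' : E'' = {p ∈ T | ¬ Relation.ReflTransGen (fun u v => (u, v) ∈ E) p.1 p.2}) :
    (∃ O : Set (V × V), IsTCut E T O ∧ O.ncard ≤ k) ↔
      (∃ O : Set (V × V), IsTCut (E ∪ E'') T O ∧ O.ncard ≤ k + E''.ncard) := by
  classical
  constructor
  · rintro ⟨O, ⟨hOE, hO⟩, hk⟩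
    refine ⟨O ∪ E'', ⟨Set.union_subset_union hOE (le_refl _), ?_⟩, ?_⟩
    · intro p hp hpath
      refine hO p hp (Relation.ReflTransGen.mono ?_ _ _ hpath)
      rintro u v ⟨h1, h2⟩
      rcases h1 with h | h
      · exact ⟨h, fun hmem => h2 (Or.inl hmem)⟩
      · exact absurd (Or.inr h) h2
    · calc (O ∪ E'').ncard ≤ O.ncard + E''.ncard := Set.ncard_union_le _ _
        _ ≤ k + E''.ncard := by omega
  · rintro ⟨O, ⟨hOE, hO⟩, hk⟩
    have hE''O : E'' ⊆ O := by
      intro e he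
      by_contra hne
      have hT : e ∈ T := by rw [hE''] at he; exact he.1
      have he' : (e.1, e.2) ∈ (E ∪ E'') \ O := ⟨Or.inr (by simpa using he), by simpa using hne⟩
      exact hO e hT (Relation.ReflTransGen.single he')
    refine ⟨O \ E'', ⟨?_, ?_⟩, ?_⟩
    · intro e he
      rcases hOE he.1 with h | h
      · exact h
      · exact absurd h he.2
    · intro p hp hpath
      apply hO p hp
      apply Relation.ReflTransGen.mono ?_ _ _ hpath
      rintro u v ⟨h1, h2⟩
      have hE_not : (u, v) ∉ E'' := by
        intro h
        rw [hE''] at h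
        exact h.2 (Relation.ReflTransGen.single h1)
      exact ⟨Or.inl h1, fun hO' => h2 ⟨hO', hE_not⟩⟩
    · have h1 : (O \ E'').ncard = O.ncard - E''.ncard :=
        Set.ncard_diff hE''O (Set.toFinite E'')
      have h2 : E''.ncard ≤ O.ncard := Set.ncard_le_ncard hE''O (Set.toFinite O)
      omega
end

section
/- Let G be a world graph, ℐ a DFA over the alphabet E, and 𝒫 = ℐ × G the product partial DFA. Then the language of the observation-relaxation NFA P of 𝒫 equals the image of L(𝒫) under the observation map, i.e., L(P) = { O(r) : r ∈ L(𝒫) } = { O(r) : r ∈ L(ℐ) ∩ Walks(G) }. -/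
/-- A world graph: regions `V`, edges `E`, events `Y`, with source/target maps,
an initial vertex, and an observation function assigning to each edge a nonempty
finite set of events. -/
structure WorldGraph (V E Y : Type*) where
  src : E → V
  tgt : E → V
  v0 : V
  obs : E → Finset Y
  obs_nonempty : ∀ e, obs e ≠ ∅

namespace WorldGraph

variable {V E Y : Type*}

/-- A walk of the world graph: a finite word `e₁ ⋯ eₙ` over `E` such that
`src e₁ = v₀` and `tgt eᵢ = src eᵢ₊₁` for all `1 ≤ i < n` (the empty word is a walk). -/
def IsWalk (G : WorldGraph V E Y) (w : List E) : Prop :=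
  (∀ h : w ≠ [], G.src (w.head h) = G.v0) ∧
    ∀ (i : ℕ) (h : i + 1 < w.length),
      G.tgt (w.get ⟨i, Nat.lt_of_succ_lt h⟩) = G.src (w.get ⟨i + 1, h⟩)

/-- The observation sequence of a word of edges: each edge's observation,
viewed as a multiset of events. -/
def obsSeq (G : WorldGraph V E Y) (w : List E) : List (Multiset Y) :=
  w.map fun e => (G.obs e).val

/-- The observation sequence of a word of edges under a sensor alteration `A : Y → Y`:
each edge `e` produces the multiset obtained by applying `A` to every element of
`obs e` (with multiplicity). -/
def obsSeqAlt (G : WorldGraph V E Y) (A : Y → Y) (w : List E) : List (Multiset Y) :=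
  w.map fun e => Multiset.map A (G.obs e).val

end WorldGraph

open Classical in
/-- The product of a DFA `A` over alphabet `E` with a world graph `G`:
a partial DFA, modeled as a total DFA on `Option (Q × V)` where `none` is a
rejecting sink standing for "undefined". States are pairs `(q, v)`, the initial
state is `(q₀, v₀)`, transitions follow an edge `e` only when `src e` matches the
current vertex, and accepting states are `F × V`. -/
noncomputable def prodDFA {V E Y Q : Type*} (A : DFA E Q) (G : WorldGraph V E Y) :
    DFA E (Option (Q × V)) where
  step := fun s e =>
    match s with
    | none => none
    | some (q, v) => if G.src e = v then some (A.step q e, G.tgt e) else none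
  start := some (A.start, G.v0)
  accept := {s | ∃ q v, s = some (q, v) ∧ q ∈ A.accept}

/-- A sensor alteration `A : Y → Y` is deceptive for the itinerary DFA `I` and the
deviation DFA `D` on the world graph `G` if every walk in `L(D) ∩ Walks(G)` produces,
under `A`, the same observation sequence as some walk in `L(I) ∩ Walks(G)`. -/
def Deceptive {V E Y QI QD : Type*} (G : WorldGraph V E Y)
    (I : DFA E QI) (D : DFA E QD) (A : Y → Y) : Prop :=
  ∀ r : List E, r ∈ D.accepts → G.IsWalk r →
    ∃ r' : List E, r' ∈ I.accepts ∧ G.IsWalk r' ∧ G.obsSeqAlt A r = G.obsSeq r'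

/-- The observation-relaxation of the product partial DFA `A × G`: an NFA over
multisets of events with the same states, initial state and accepting states,
whose transitions on letter `x` follow any edge `e` with `O(e) = x` on which the
product transition is defined. -/
def relaxNFA {V E Y Q : Type*} (A : DFA E Q) (G : WorldGraph V E Y) :
    NFA (Multiset Y) (Q × V) where
  step := fun p x =>
    {p' | ∃ e : E, G.src e = p.2 ∧ (G.obs e).val = x ∧ p' = (A.step p.1 e, G.tgt e)}
  start := {(A.start, G.v0)}
  accept := {p | p.1 ∈ A.accept}

/-- The observation-relaxation of the product partial DFA `D × G` under a sensor
alteration `A`: transitions on letter `x` follow any edge `e` with `O_A(e) = x`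
on which the product transition is defined. -/
def relaxNFAAlt {V E Y Q : Type*} (D : DFA E Q) (G : WorldGraph V E Y) (A : Y → Y) :
    NFA (Multiset Y) (Q × V) where
  step := fun p x =>
    {p' | ∃ e : E, G.src e = p.2 ∧ Multiset.map A (G.obs e).val = x ∧
      p' = (D.step p.1 e, G.tgt e)}
  start := {(D.start, G.v0)}
  accept := {p | p.1 ∈ D.accept}


section Aux

variable {V E Y Q : Type*}

/-- Trace relation of the product machine. -/
def RTrace (I : DFA E Q) (G : WorldGraph V E Y) : (Q × V) → List E → (Q × V) → Prop
  | p, [], p' => p' = p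
  | p, e :: r, p' => G.src e = p.2 ∧ RTrace I G (I.step p.1 e, G.tgt e) r p'

/-- Chain condition from a vertex. -/
def ChainFrom (G : WorldGraph V E Y) : V → List E → Prop
  | _, [] => True
  | v, e :: r => G.src e = v ∧ ChainFrom G (G.tgt e) r

/-- End vertex of a walk starting at `v`. -/
def endV (G : WorldGraph V E Y) : V → List E → V
  | v, [] => v
  | _, e :: r => endV G (G.tgt e) r

lemma rtrace_iff (I : DFA E Q) (G : WorldGraph V E Y) :
    ∀ (r : List E) (q : Q) (v : V) (p' : Q × V),
      RTrace I G (q, v) r p' ↔ ChainFrom G v r ∧ p' = (I.evalFrom q r, endV G v r) := by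
  intro r
  induction r with
  | nil => intro q v p'; simp [RTrace, ChainFrom, endV, DFA.evalFrom]
  | cons e r ih =>
      intro q v p'
      simp only [RTrace, ChainFrom, endV, ih, DFA.evalFrom, List.foldl_cons]
      tauto

lemma chainFrom_iff (G : WorldGraph V E Y) :
    ∀ (r : List E) (v : V),
      ChainFrom G v r ↔ ((∀ h : r ≠ [], G.src (r.head h) = v) ∧
        ∀ (i : ℕ) (h : i + 1 < r.length),
          G.tgt (r.get ⟨i, Nat.lt_of_succ_lt h⟩) = G.src (r.get ⟨i + 1, h⟩)) := by
  intro r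
  induction r with
  | nil => intro v; simp [ChainFrom]
  | cons e r ih =>
      intro v
      simp only [ChainFrom, ih]
      constructor
      · rintro ⟨hv, hh, hc⟩
        refine ⟨fun _ => hv, ?_⟩
        intro i h
        cases i with
        | zero =>
            cases r with
            | nil => simp at h
            | cons f r' => simpa using (hh (by simp)).symm
        | succ j =>
            have h' : j + 1 < r.length := by simpa using h
            simpa using hc j h'
      · rintro ⟨hh, hc⟩
        refine ⟨hh (by simp), ?_, ?_⟩
        · intro hne
          cases r with
          | nil => simp at hne
          | cons f r' =>
              have := hc 0 (by simp [Nat.succ_lt_succ_iff])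
              simpa using this.symm
        · intro i h
          have := hc (i + 1) (by simpa using Nat.succ_lt_succ h)
          simpa using this

lemma isWalk_iff_chainFrom (G : WorldGraph V E Y) (r : List E) :
    G.IsWalk r ↔ ChainFrom G G.v0 r := by
  rw [chainFrom_iff]; rfl

lemma prod_evalFrom_none (I : DFA E Q) (G : WorldGraph V E Y) (r : List E) :
    (prodDFA I G).evalFrom none r = none := by
  induction r with
  | nil => rfl
  | cons e r ih => simpa [DFA.evalFrom, prodDFA] using ih

lemma prod_evalFrom_some (I : DFA E Q) (G : WorldGraph V E Y) :
    ∀ (r : List E) (p p' : Q × V),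
      (prodDFA I G).evalFrom (some p) r = some p' ↔ RTrace I G p r p' := by
  classical
  intro r
  induction r with
  | nil =>
      intro p p'
      simp only [DFA.evalFrom, List.foldl_nil, RTrace]
      exact ⟨fun h => (Option.some_inj.mp h).symm, fun h => by rw [h]⟩
  | cons e r ih =>
      rintro ⟨q, v⟩ p'
      simp only [DFA.evalFrom, List.foldl_cons, RTrace]
      show (prodDFA I G).evalFrom ((prodDFA I G).step (some (q, v)) e) r = some p' ↔ _
      have hstep : (prodDFA I G).step (some (q, v)) e =
          if G.src e = v then some (I.step q e, G.tgt e) else none := rfl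
      rw [hstep]
      by_cases hv : G.src e = v
      · rw [if_pos hv, ih]
        simp [hv]
      · rw [if_neg hv, prod_evalFrom_none]
        simp [hv]

lemma prod_accepts_iff (I : DFA E Q) (G : WorldGraph V E Y) (r : List E) :
    r ∈ (prodDFA I G).accepts ↔ r ∈ I.accepts ∧ G.IsWalk r := by
  rw [DFA.mem_accepts]
  show (prodDFA I G).evalFrom (some (I.start, G.v0)) r ∈ _ ↔ _
  constructor
  · intro h
    obtain ⟨q, v, heq, hq⟩ := h
    have := (prod_evalFrom_some I G r (I.start, G.v0) (q, v)).mp heq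
    rw [rtrace_iff] at this
    obtain ⟨hc, hp⟩ := this
    have hq' : q = I.evalFrom I.start r := by
      have := congrArg Prod.fst hp; simpa using this
    refine ⟨?_, (isWalk_iff_chainFrom G r).mpr hc⟩
    rw [DFA.mem_accepts]; rw [hq'] at hq; exact hq
  · rintro ⟨hacc, hwalk⟩
    refine ⟨I.evalFrom I.start r, endV G G.v0 r, ?_, hacc⟩
    rw [prod_evalFrom_some, rtrace_iff]
    exact ⟨(isWalk_iff_chainFrom G r).mp hwalk, rfl⟩

lemma relax_evalFrom (I : DFA E Q) (G : WorldGraph V E Y) :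
    ∀ (t : List (Multiset Y)) (S : Set (Q × V)) (p' : Q × V),
      p' ∈ (relaxNFA I G).evalFrom S t ↔
        ∃ p ∈ S, ∃ r : List E, RTrace I G p r p' ∧ G.obsSeq r = t := by
  intro t
  induction t with
  | nil =>
      intro S p'
      simp only [NFA.evalFrom, List.foldl_nil]
      constructor
      · intro h; exact ⟨p', h, [], rfl, rfl⟩
      · rintro ⟨p, hp, r, htr, hobs⟩
        have : r = [] := by
          cases r with
          | nil => rfl
          | cons e r' => simp [WorldGraph.obsSeq] at hobs
        subst this
        cases htr; exact hp
  | cons x t ih =>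
      intro S p'
      show p' ∈ (relaxNFA I G).evalFrom ((relaxNFA I G).stepSet S x) t ↔ _
      rw [ih]
      constructor
      · rintro ⟨q, hq, r, htr, hobs⟩
        rw [NFA.mem_stepSet] at hq
        obtain ⟨p, hp, hstep⟩ := hq
        obtain ⟨e, hsrc, hx, hqeq⟩ := hstep
        refine ⟨p, hp, e :: r, ⟨hsrc, by rw [← hqeq]; exact htr⟩, ?_⟩
        simp [WorldGraph.obsSeq, hx, hobs]
        simpa [WorldGraph.obsSeq] using hobs
      · rintro ⟨p, hp, r, htr, hobs⟩
        cases r with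
        | nil => simp [WorldGraph.obsSeq] at hobs
        | cons e r' =>
            obtain ⟨hsrc, htr'⟩ := htr
            simp only [WorldGraph.obsSeq, List.map_cons, List.cons.injEq] at hobs
            refine ⟨(I.step p.1 e, G.tgt e), ?_, r', htr', hobs.2⟩
            rw [NFA.mem_stepSet]
            exact ⟨p, hp, e, hsrc, hobs.1, rfl⟩

lemma relax_accepts_iff (I : DFA E Q) (G : WorldGraph V E Y) (t : List (Multiset Y)) :
    t ∈ (relaxNFA I G).accepts ↔
      ∃ r : List E, r ∈ I.accepts ∧ G.IsWalk r ∧ t = G.obsSeq r := by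
  rw [NFA.mem_accepts]
  constructor
  · rintro ⟨p', hacc, hmem⟩
    rw [relax_evalFrom] at hmem
    obtain ⟨p, hp, r, htr, hobs⟩ := hmem
    have hp' : p = (I.start, G.v0) := hp
    subst hp'
    rw [rtrace_iff] at htr
    obtain ⟨hc, hpeq⟩ := htr
    refine ⟨r, ?_, (isWalk_iff_chainFrom G r).mpr hc, hobs.symm⟩
    have : p'.1 = I.evalFrom I.start r := by rw [hpeq]
    show I.evalFrom I.start r ∈ I.accept
    rw [← this]; exact hacc
  · rintro ⟨r, hacc, hwalk, hobs⟩
    refine ⟨(I.evalFrom I.start r, endV G G.v0 r), hacc, ?_⟩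
    rw [relax_evalFrom]
    refine ⟨(I.start, G.v0), rfl, r, ?_, hobs.symm⟩
    rw [rtrace_iff]
    exact ⟨(isWalk_iff_chainFrom G r).mp hwalk, rfl⟩

end Aux

/-- The language of the observation-relaxation NFA of `𝒫 = ℐ × G` is the image of
`L(𝒫)` under the observation map, which equals `{O(r) : r ∈ L(ℐ) ∩ Walks(G)}`. -/
theorem relaxNFA_accepts {V E Y Q : Type*} [Fintype V] [Fintype E] [Fintype Y]
    (G : WorldGraph V E Y) (I : DFA E Q) :
    (relaxNFA I G).accepts
        = {t | ∃ r : List E, r ∈ (prodDFA I G).accepts ∧ t = G.obsSeq r} ∧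
      (relaxNFA I G).accepts
        = {t | ∃ r : List E, r ∈ I.accepts ∧ G.IsWalk r ∧ t = G.obsSeq r} := by
  constructor
  · ext t
    simp only [Set.mem_setOf_eq, relax_accepts_iff]
    constructor
    · rintro ⟨r, h1, h2, h3⟩; exact ⟨r, (prod_accepts_iff I G r).mpr ⟨h1, h2⟩, h3⟩
    · rintro ⟨r, h1, h3⟩
      obtain ⟨ha, hw⟩ := (prod_accepts_iff I G r).mp h1
      exact ⟨r, ha, hw, h3⟩
  · ext t
    simp only [Set.mem_setOf_eq, relax_accepts_iff]
    exact Iff.rfl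
end
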